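/- arXiv:2307.16293 — 4 statements merged into one kernel-verified Lean document; each statement's English description precedes it below -/
import Mathlib

section
/- Let K be a field, U a K-vector space, and f a nondegenerate alternating bilinear form on U. Let M be a generator and p ∈ U a nonzero vector with p ∉ M. (i) If there exists a generator M₁ with M ∩ M₁ = 0, then there exists a generator M' with p ∈ M', M ∩ M' = 0. (ii) If moreover M₁ can be chosen with M ∩ M₁ = 0 and M + M₁ = U, then there exists a generator M' with p ∈ M', M ∩ M' = 0 and M + M' = U. (Symplectic instance of the paper's Lemma: if a generator admits an opposite, it admits an opposite through any exterior point, and likewise for complements.) -/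
/-- A subspace is totally isotropic for a bilinear form. -/
def TotallyIsotropic {K U : Type*} [Field K] [AddCommGroup U] [Module K U]
    (f : U →ₗ[K] U →ₗ[K] K) (W : Submodule K U) : Prop :=
  ∀ x ∈ W, ∀ y ∈ W, f x y = 0

/-- A generator: a maximal totally isotropic subspace. -/
def IsGenerator {K U : Type*} [Field K] [AddCommGroup U] [Module K U]
    (f : U →ₗ[K] U →ₗ[K] K) (W : Submodule K U) : Prop :=
  TotallyIsotropic f W ∧
    ∀ W' : Submodule K U, TotallyIsotropic f W' → W ≤ W' → W' = W

section Aux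

variable {K U : Type*} [Field K] [AddCommGroup U] [Module K U]
variable (f : U →ₗ[K] U →ₗ[K] K)

lemma skew_aux (halt : ∀ x, f x x = 0) (x y : U) : f x y = - f y x := by
  have h := halt (x + y)
  simp only [map_add, LinearMap.add_apply, halt] at h
  linear_combination h

lemma mem_of_perp (halt : ∀ x, f x x = 0) {M : Submodule K U} (hM : IsGenerator f M)
    (x : U) (hx : ∀ y ∈ M, f x y = 0) : x ∈ M := by
  have hiso : TotallyIsotropic f (M ⊔ K ∙ x) := by
    intro u hu v hv
    rw [Submodule.mem_sup] at hu hv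
    obtain ⟨m, hm, u', hu', rfl⟩ := hu
    obtain ⟨n, hn, v', hv', rfl⟩ := hv
    obtain ⟨c, rfl⟩ := Submodule.mem_span_singleton.mp hu'
    obtain ⟨d, rfl⟩ := Submodule.mem_span_singleton.mp hv'
    have h1 : f m n = 0 := hM.1 m hm n hn
    have h2 : f x n = 0 := hx n hn
    have h3 : f m x = 0 := by rw [skew_aux f halt, hx m hm]; ring
    simp [map_add, map_smul, LinearMap.add_apply, LinearMap.smul_apply,
      h1, h2, h3, halt, smul_eq_mul]
  have h := hM.2 _ hiso le_sup_left
  rw [← h]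
  exact Submodule.mem_sup_right (Submodule.mem_span_singleton_self x)

lemma fsub (a b x : U) : f (a - b) x = f a x - f b x := by
  rw [map_sub]; rfl

lemma fsmul (c : K) (a x : U) : f (c • a) x = c * f a x := by
  rw [map_smul]; rfl

lemma fsub' (x a b : U) : f x (a - b) = f x a - f x b := by
  rw [map_sub]

lemma fsmul' (x : U) (c : K) (a : U) : f x (c • a) = c * f x a := by
  rw [map_smul]; rfl

lemma gen_of_perp {W : Submodule K U} (hiso : TotallyIsotropic f W)
    (h : ∀ x, (∀ y ∈ W, f x y = 0) → x ∈ W) : IsGenerator f W :=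
  ⟨hiso, fun W' hW' hle =>
    le_antisymm (fun x hx => h x (fun y hy => hW' x hx y (hle hy))) hle⟩

end Aux

section Main

variable {K U : Type*} [Field K] [AddCommGroup U] [Module K U]
variable (f : U →ₗ[K] U →ₗ[K] K)

/-- Case A: transvection-type construction for a point in `M ⊔ L`. -/
lemma caseA (halt : ∀ x, f x x = 0) {M L : Submodule K U}
    (hM : IsGenerator f M) (hL : IsGenerator f L) (hML : M ⊓ L = ⊥)
    (ψ : U →ₗ[K] U) (hψM : ∀ x, ψ x ∈ M) (hψ0 : ∀ x ∈ M, ψ x = 0)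
    (hψsym : ∀ x y, f (ψ x) y = f (ψ y) x)
    (p : U) (hpψ : p - ψ p ∈ L) :
    ∃ M' : Submodule K U, IsGenerator f M' ∧ p ∈ M' ∧ M ⊓ M' = ⊥ ∧ M ⊔ M' = M ⊔ L := by
  set σ : U →ₗ[K] U := LinearMap.id + ψ with hσdef
  have hσapp : ∀ x, σ x = x + ψ x := fun x => rfl
  have hiso : ∀ a b, f (σ a) (σ b) = f a b := by
    intro a b
    have h1 : f (ψ a) (ψ b) = 0 := hM.1 _ (hψM a) _ (hψM b)
    have h2 : f a (ψ b) = - f (ψ b) a := skew_aux f halt _ _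
    have h3 := hψsym a b
    rw [hσapp, hσapp]
    simp only [map_add, LinearMap.add_apply]
    rw [h1, h2, ← h3]
    ring
  have hinv : ∀ x, σ (x - ψ x) = x := by
    intro x
    have h0 : ψ (ψ x) = 0 := hψ0 (ψ x) (hψM x)
    rw [hσapp]
    rw [map_sub, h0, sub_zero]
    abel
  refine ⟨L.map σ, gen_of_perp f ?_ ?_, ?_, ?_, ?_⟩
  · rintro x hx y hy
    obtain ⟨l, hl, rfl⟩ := Submodule.mem_map.mp hx
    obtain ⟨l', hl', rfl⟩ := Submodule.mem_map.mp hy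
    rw [hiso]
    exact hL.1 l hl l' hl'
  · intro x hx
    have key : ∀ l ∈ L, f (x - ψ x) l = 0 := by
      intro l hl
      have h := hx (σ l) (Submodule.mem_map_of_mem hl)
      have h2 := hiso (x - ψ x) l
      rw [hinv] at h2
      rw [← h2]
      exact h
    have hxL : x - ψ x ∈ L := mem_of_perp f halt hL _ key
    have := hinv x
    exact Submodule.mem_map.mpr ⟨x - ψ x, hxL, this⟩
  · have : p - ψ p ∈ L := hpψ
    exact Submodule.mem_map.mpr ⟨p - ψ p, hpψ, hinv p⟩
  · rw [eq_bot_iff]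
    rintro x hx
    obtain ⟨hxM, hxM'⟩ := Submodule.mem_inf.mp hx
    obtain ⟨l, hl, hlx⟩ := Submodule.mem_map.mp hxM'
    have hlM : l ∈ M := by
      have : l = x - ψ l := by rw [← hlx, hσapp]; abel
      rw [this]
      exact Submodule.sub_mem M hxM (hψM l)
    have : l ∈ M ⊓ L := Submodule.mem_inf.mpr ⟨hlM, hl⟩
    rw [hML] at this
    have hl0 : l = 0 := (Submodule.mem_bot K).mp this
    rw [← hlx, hl0, map_zero]
    exact Submodule.zero_mem ⊥
  · apply le_antisymm
    · apply sup_le le_sup_left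
      rintro x hx
      obtain ⟨l, hl, rfl⟩ := Submodule.mem_map.mp hx
      rw [hσapp]
      exact Submodule.add_mem _ (Submodule.mem_sup_right hl)
        (Submodule.mem_sup_left (hψM l))
    · apply sup_le le_sup_left
      intro l hl
      have : l = σ l - ψ l := by rw [hσapp]; abel
      rw [this]
      exact Submodule.sub_mem _
        (Submodule.mem_sup_right (Submodule.mem_map_of_mem hl))
        (Submodule.mem_sup_left (hψM l))

end Main

section Main2

variable {K U : Type*} [Field K] [AddCommGroup U] [Module K U]
variable (f : U →ₗ[K] U →ₗ[K] K)

/-- Case B: direct construction for a point outside `M ⊔ L`. -/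
lemma caseB (halt : ∀ x, f x x = 0) {M L : Submodule K U}
    (hM : IsGenerator f M) (hL : IsGenerator f L) (hML : M ⊓ L = ⊥)
    (p : U) (hpML : p ∉ M ⊔ L) :
    ∃ M' : Submodule K U, IsGenerator f M' ∧ p ∈ M' ∧ M ⊓ M' = ⊥ := by
  set W : Submodule K U := (L ⊓ LinearMap.ker (f p)) ⊔ K ∙ p with hWdef
  have hpW : p ∈ W := Submodule.mem_sup_right (Submodule.mem_span_singleton_self p)
  refine ⟨W, gen_of_perp f ?_ ?_, hpW, ?_⟩
  · -- totally isotropic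
    rintro u hu v hv
    obtain ⟨x, hx, u', hu', rfl⟩ := Submodule.mem_sup.mp hu
    obtain ⟨y, hy, v', hv', rfl⟩ := Submodule.mem_sup.mp hv
    obtain ⟨c, rfl⟩ := Submodule.mem_span_singleton.mp hu'
    obtain ⟨d, rfl⟩ := Submodule.mem_span_singleton.mp hv'
    obtain ⟨hxL, hxk⟩ := Submodule.mem_inf.mp hx
    obtain ⟨hyL, hyk⟩ := Submodule.mem_inf.mp hy
    have hpx : f p x = 0 := LinearMap.mem_ker.mp hxk
    have hpy : f p y = 0 := LinearMap.mem_ker.mp hyk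
    have hxy : f x y = 0 := hL.1 x hxL y hyL
    have hxp : f x p = 0 := by rw [skew_aux f halt, hpx]; ring
    simp [map_add, map_smul, LinearMap.add_apply, LinearMap.smul_apply,
      hxy, hxp, hpy, halt, smul_eq_mul]
  · -- maximality
    intro z hz
    by_cases hall : ∀ l ∈ L, f p l = 0
    · have hLW : L ≤ W := by
        refine le_trans ?_ le_sup_left
        exact le_inf le_rfl (fun l hl => LinearMap.mem_ker.mpr (hall l hl))
      have hzL : z ∈ L := mem_of_perp f halt hL z (fun l hl => hz l (hLW hl))
      exact hLW hzL
    · push_neg at hall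
      obtain ⟨q0, hq0L, hq0ne⟩ := hall
      obtain ⟨q, hqL, hfpq⟩ : ∃ q ∈ L, f p q = 1 :=
        ⟨(f p q0)⁻¹ • q0, Submodule.smul_mem L _ hq0L, by
          rw [map_smul, smul_eq_mul, inv_mul_cancel₀ hq0ne]⟩
      have hfpz : f p z = 0 := by rw [skew_aux f halt, hz p hpW]; ring
      have hz'L : z - (f z q) • p ∈ L := by
        apply mem_of_perp f halt hL
        intro l hl
        have hl'L : l - (f p l) • q ∈ L :=
          Submodule.sub_mem L hl (Submodule.smul_mem L _ hqL)
        have hl'k : f p (l - (f p l) • q) = 0 := by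
          rw [fsub', fsmul', hfpq]; ring
        have h1 : f z (l - (f p l) • q) = 0 :=
          hz _ (Submodule.mem_sup_left
            (Submodule.mem_inf.mpr ⟨hl'L, LinearMap.mem_ker.mpr hl'k⟩))
        rw [fsub', fsmul'] at h1
        rw [fsub, fsmul]
        linear_combination h1
      have hz'k : f p (z - (f z q) • p) = 0 := by
        rw [fsub', fsmul', halt, hfpz]; ring
      have hdec : z = (z - (f z q) • p) + (f z q) • p := by abel
      rw [hdec]
      exact Submodule.add_mem W
        (Submodule.mem_sup_left
          (Submodule.mem_inf.mpr ⟨hz'L, LinearMap.mem_ker.mpr hz'k⟩))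
        (Submodule.mem_sup_right
          (Submodule.smul_mem _ _ (Submodule.mem_span_singleton_self p)))
  · -- M ⊓ W = ⊥
    rw [eq_bot_iff]
    rintro x hx
    obtain ⟨hxM, hxW⟩ := Submodule.mem_inf.mp hx
    obtain ⟨y, hy, x', hx', hsum⟩ := Submodule.mem_sup.mp hxW
    obtain ⟨c, rfl⟩ := Submodule.mem_span_singleton.mp hx'
    obtain ⟨hyL, hyk⟩ := Submodule.mem_inf.mp hy
    by_cases hc : c = 0
    · rw [hc, zero_smul, add_zero] at hsum
      subst hsum
      have : y ∈ M ⊓ L := Submodule.mem_inf.mpr ⟨hxM, hyL⟩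
      rw [hML] at this
      exact this
    · exfalso
      apply hpML
      have hp : p = c⁻¹ • (x - y) := by
        have : x - y = c • p := by rw [← hsum]; abel
        rw [this, smul_smul, inv_mul_cancel₀ hc, one_smul]
      rw [hp]
      exact Submodule.smul_mem _ _
        (Submodule.sub_mem _ (Submodule.mem_sup_left hxM) (Submodule.mem_sup_right hyL))

end Main2

section Main3

variable {K U : Type*} [Field K] [AddCommGroup U] [Module K U]
variable (f : U →ₗ[K] U →ₗ[K] K)

lemma fadd (a b x : U) : f (a + b) x = f a x + f b x := by
  rw [map_add]; rfl

/-- Combined case A: for a point of `M ⊔ L` outside `M`, build the transvection. -/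
lemma caseA' (halt : ∀ x, f x x = 0) {M L : Submodule K U}
    (hM : IsGenerator f M) (hL : IsGenerator f L) (hML : M ⊓ L = ⊥)
    (p : U) (hpM : p ∉ M) (hpML : p ∈ M ⊔ L) :
    ∃ M' : Submodule K U, IsGenerator f M' ∧ p ∈ M' ∧ M ⊓ M' = ⊥ ∧ M ⊔ M' = M ⊔ L := by
  obtain ⟨m, hm, q, hq, hmq⟩ := Submodule.mem_sup.mp hpML
  have hpsub : p - m ∈ L := by
    have h : p - m = q := by rw [← hmq]; abel
    rw [h]; exact hq
  by_cases hc : f m p = 0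
  · -- find a ∈ M with f a p = 1
    have hex : ∃ a ∈ M, f a p ≠ 0 := by
      by_contra h
      push_neg at h
      exact hpM (mem_of_perp f halt hM p (fun y hy => by
        rw [skew_aux f halt, h y hy]; ring))
    obtain ⟨a0, ha0M, ha0ne⟩ := hex
    obtain ⟨a, haM, hfap⟩ : ∃ a ∈ M, f a p = 1 :=
      ⟨(f a0 p)⁻¹ • a0, Submodule.smul_mem M _ ha0M, by
        rw [fsmul, inv_mul_cancel₀ ha0ne]⟩
    set ψ : U →ₗ[K] U := (f a).smulRight m + (f m).smulRight a with hψdef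
    have hψapp : ∀ x, ψ x = (f a x) • m + (f m x) • a := fun x => rfl
    have hψM : ∀ x, ψ x ∈ M := fun x => by
      rw [hψapp]
      exact Submodule.add_mem M (Submodule.smul_mem M _ hm) (Submodule.smul_mem M _ haM)
    have hψ0 : ∀ x ∈ M, ψ x = 0 := fun x hx => by
      rw [hψapp, hM.1 a haM x hx, hM.1 m hm x hx, zero_smul, zero_smul, add_zero]
    have hψsym : ∀ x y, f (ψ x) y = f (ψ y) x := fun x y => by
      rw [hψapp, hψapp, fadd, fadd, fsmul, fsmul, fsmul, fsmul]
      ring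
    have hpψ : p - ψ p ∈ L := by
      have h : ψ p = m := by
        rw [hψapp, hfap, hc, one_smul, zero_smul, add_zero]
      rw [h]; exact hpsub
    exact caseA f halt hM hL hML ψ hψM hψ0 hψsym p hpψ
  · set ψ : U →ₗ[K] U := ((f m p)⁻¹ • (f m)).smulRight m with hψdef
    have hψapp : ∀ x, ψ x = ((f m p)⁻¹ * f m x) • m := fun x => rfl
    have hψM : ∀ x, ψ x ∈ M := fun x => by
      rw [hψapp]; exact Submodule.smul_mem M _ hm
    have hψ0 : ∀ x ∈ M, ψ x = 0 := fun x hx => by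
      rw [hψapp, hM.1 m hm x hx, mul_zero, zero_smul]
    have hψsym : ∀ x y, f (ψ x) y = f (ψ y) x := fun x y => by
      rw [hψapp, hψapp, fsmul, fsmul]
      ring
    have hpψ : p - ψ p ∈ L := by
      have h : ψ p = m := by
        rw [hψapp, inv_mul_cancel₀ hc, one_smul]
      rw [h]; exact hpsub
    exact caseA f halt hM hL hML ψ hψM hψ0 hψsym p hpψ

end Main3

/-- Symplectic instance of the paper's Lemma: (i) if a generator admits an
opposite generator, it admits an opposite generator through any exterior point;
(ii) likewise for complements. -/
theorem stmt_2 {K U : Type*} [Field K] [AddCommGroup U] [Module K U]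
    (f : U →ₗ[K] U →ₗ[K] K)
    (halt : ∀ x, f x x = 0)
    (hnd : ∀ x, (∀ y, f x y = 0) → x = 0)
    (M : Submodule K U) (hM : IsGenerator f M)
    (p : U) (hp0 : p ≠ 0) (hpM : p ∉ M) :
    ((∃ M₁ : Submodule K U, IsGenerator f M₁ ∧ M ⊓ M₁ = ⊥) →
      ∃ M' : Submodule K U, IsGenerator f M' ∧ p ∈ M' ∧ M ⊓ M' = ⊥) ∧
    ((∃ M₁ : Submodule K U, IsGenerator f M₁ ∧ M ⊓ M₁ = ⊥ ∧ M ⊔ M₁ = ⊤) →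
      ∃ M' : Submodule K U, IsGenerator f M' ∧ p ∈ M' ∧ M ⊓ M' = ⊥ ∧ M ⊔ M' = ⊤) := by

  constructor
  · rintro ⟨L, hL, hML⟩
    by_cases hpML : p ∈ M ⊔ L
    · obtain ⟨M', h1, h2, h3, _⟩ := caseA' f halt hM hL hML p hpM hpML
      exact ⟨M', h1, h2, h3⟩
    · exact caseB f halt hM hL hML p hpML
  · rintro ⟨L, hL, hML, hsup⟩
    have hpML : p ∈ M ⊔ L := by rw [hsup]; trivial
    obtain ⟨M', h1, h2, h3, h4⟩ := caseA' f halt hM hL hML p hpM hpML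
    exact ⟨M', h1, h2, h3, by rw [h4, hsup]⟩
end

section
/- Let K be a field, U a K-vector space, and f a nondegenerate alternating bilinear form on U. Let M₁ and M₂ be generators with M₁ ∩ M₂ = 0 and M₁ + M₂ = U (a complementary pair), and suppose that the dimension of M₂ is at most the dimension of M₁ (dimensions taken as cardinals, i.e. Module.rank). Then every generator M₃ with M₃ ∩ M₁ = 0 and M₃ ∩ M₂ = 0 has dimension at most the dimension of M₂; and if moreover M₃ + M₁ = U, then the dimension of M₃ equals the dimension of M₂. (Symplectic instance of the paper's Lemma on dimensions in a complementary pair.) -/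
lemma rank_le_of_compl {K U : Type*} [Field K] [AddCommGroup U] [Module K U]
    (A B C : Submodule K U) (hAB : IsCompl A B) (hC : C ⊓ A = ⊥) :
    Module.rank K C ≤ Module.rank K B := by
  have e : (U ⧸ A) ≃ₗ[K] B := A.quotientEquivOfIsCompl B hAB
  have hinj : Function.Injective (A.mkQ.comp C.subtype) := by
    rw [← LinearMap.ker_eq_bot, LinearMap.ker_comp, Submodule.ker_mkQ]
    rw [Submodule.eq_bot_iff] at hC ⊢
    intro x hx
    exact Subtype.ext (hC x ⟨x.2, hx⟩)
  calc Module.rank K C ≤ Module.rank K (U ⧸ A) :=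
        LinearMap.rank_le_of_injective _ hinj
    _ = Module.rank K B := e.rank_eq

/-- Symplectic instance of the Lemma on dimensions in a complementary pair:
if `{M₁, M₂}` is a complementary pair of generators with `dim M₂ ≤ dim M₁`, then every
generator `M₃` opposite to both has `dim M₃ ≤ dim M₂`, with equality if `M₃`
is also a complement of `M₁`. -/
theorem stmt_3 {K U : Type*} [Field K] [AddCommGroup U] [Module K U]
    (f : U →ₗ[K] U →ₗ[K] K)
    (halt : ∀ x, f x x = 0)
    (hnd : ∀ x, (∀ y, f x y = 0) → x = 0)
    (M₁ M₂ : Submodule K U)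
    (hg1 : IsGenerator f M₁) (hg2 : IsGenerator f M₂)
    (hdisj : M₁ ⊓ M₂ = ⊥) (hsum : M₁ ⊔ M₂ = ⊤)
    (hdim : Module.rank K M₂ ≤ Module.rank K M₁)
    (M₃ : Submodule K U) (hg3 : IsGenerator f M₃)
    (h31 : M₃ ⊓ M₁ = ⊥) (h32 : M₃ ⊓ M₂ = ⊥) :
    Module.rank K M₃ ≤ Module.rank K M₂ ∧
      (M₃ ⊔ M₁ = ⊤ → Module.rank K M₃ = Module.rank K M₂) := by
  have hc12 : IsCompl M₁ M₂ := ⟨disjoint_iff.mpr hdisj, codisjoint_iff.mpr hsum⟩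
  have hle : Module.rank K M₃ ≤ Module.rank K M₂ := rank_le_of_compl M₁ M₂ M₃ hc12 h31
  refine ⟨hle, fun hsum3 => ?_⟩
  have hc13 : IsCompl M₁ M₃ :=
    ⟨disjoint_iff.mpr (by rw [inf_comm]; exact h31), codisjoint_iff.mpr (by rw [sup_comm]; exact hsum3)⟩
  exact le_antisymm hle (rank_le_of_compl M₁ M₃ M₂ hc13 (by rw [inf_comm]; exact hdisj))
end

section
/- Let K be a field, U a K-vector space, and f a nondegenerate alternating bilinear form on U. Let M₁, M₂, M₃ be generators which are pairwise opposite (M₁ ∩ M₂ = M₁ ∩ M₃ = M₂ ∩ M₃ = 0). If the three cardinal dimensions of M₁, M₂, M₃ are not all equal, then at least one of the three pairs fails to be complementary: M₁ + M₂ ≠ U, or M₁ + M₃ ≠ U, or M₂ + M₃ ≠ U. (Symplectic instance of the paper's Corollary on triples of mutually opposite generators of unequal dimensions.) -/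
/-! Any two complements of a subspace are isomorphic to the quotient by it, so three pairwise
complementary subspaces all have the same dimension. -/

theorem Submodule.rank_eq_of_isCompl {R E : Type*} [Ring R] [AddCommGroup E] [Module R E]
    {p q r : Submodule R E} (hq : IsCompl p q) (hr : IsCompl p r) :
    Module.rank R q = Module.rank R r :=
  ((p.quotientEquivOfIsCompl q hq).symm.trans (p.quotientEquivOfIsCompl r hr)).rank_eq

theorem stmt_4_general {K U : Type*} [Field K] [AddCommGroup U] [Module K U]
    (M₁ M₂ M₃ : Submodule K U)
    (h12 : M₁ ⊓ M₂ = ⊥) (h13 : M₁ ⊓ M₃ = ⊥) (h23 : M₂ ⊓ M₃ = ⊥)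
    (hne : ¬ (Module.rank K M₁ = Module.rank K M₂ ∧
              Module.rank K M₂ = Module.rank K M₃)) :
    M₁ ⊔ M₂ ≠ ⊤ ∨ M₁ ⊔ M₃ ≠ ⊤ ∨ M₂ ⊔ M₃ ≠ ⊤ := by
  by_contra! ⟨hs12, hs13, hs23⟩
  have hc12 := IsCompl.of_eq h12 hs12
  have hc13 := IsCompl.of_eq h13 hs13
  have hc23 := IsCompl.of_eq h23 hs23
  exact hne ⟨Submodule.rank_eq_of_isCompl hc13.symm hc23.symm,
    Submodule.rank_eq_of_isCompl hc12 hc13⟩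

/-- Symplectic instance of the Corollary: three mutually opposite generators of
unequal dimensions cannot be pairwise complementary. -/
theorem stmt_4 {K U : Type*} [Field K] [AddCommGroup U] [Module K U]
    (f : U →ₗ[K] U →ₗ[K] K)
    (halt : ∀ x, f x x = 0)
    (hnd : ∀ x, (∀ y, f x y = 0) → x = 0)
    (M₁ M₂ M₃ : Submodule K U)
    (hg1 : IsGenerator f M₁) (hg2 : IsGenerator f M₂) (hg3 : IsGenerator f M₃)
    (h12 : M₁ ⊓ M₂ = ⊥) (h13 : M₁ ⊓ M₃ = ⊥) (h23 : M₂ ⊓ M₃ = ⊥)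
    (hne : ¬ (Module.rank K M₁ = Module.rank K M₂ ∧
              Module.rank K M₂ = Module.rank K M₃)) :
    M₁ ⊔ M₂ ≠ ⊤ ∨ M₁ ⊔ M₃ ≠ ⊤ ∨ M₂ ⊔ M₃ ≠ ⊤ :=
  stmt_4_general M₁ M₂ M₃ h12 h13 h23 hne
end

section
/- Let F be a field, V an infinite-dimensional F-vector space, V* its dual, V̄ = V ⊕ V*, q the quadratic form on V̄ given by q(a,α) = α(a), and f_q((a,α),(b,β)) = α(b) + β(a) its polar form. Let u, v ∈ V̄ be nonzero q-singular vectors with f_q(u,v) ≠ 0 (so [u] and [v] are opposite points of the quadric S_q). If w ∈ V̄ is a nonzero q-singular vector such that f_q(w,z) = 0 for every q-singular vector z satisfying f_q(z,u) = 0 and f_q(z,v) = 0, then w ∈ span{u} or w ∈ span{v}. (Hence the hyperbolic line {[u],[v]}^{⊥⊥} of S_q has exactly two points.) -/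
/-- The quadratic form `q(a,α) = α(a)` on `V̄ = V ⊕ V*`. -/
def quadForm {F V : Type*} [Field F] [AddCommGroup V] [Module F V]
    (p : V × Module.Dual F V) : F :=
  p.2 p.1

/-- The polar form `f_q((a,α),(b,β)) = α(b) + β(a)` of `q`. -/
def polarForm {F V : Type*} [Field F] [AddCommGroup V] [Module F V]
    (p q : V × Module.Dual F V) : F :=
  p.2 q.1 + q.2 p.1

/-!
Write `u = (A, α)`, `v = (B, β)`, `e = f_q(u, v)` and `w' = w - s u - t v` with
`s = f_q(w, v) / e`, `t = f_q(w, u) / e`. Then `w'` is orthogonal to `u`, `v` and to every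
singular `z ⊥ u, v`, and such a `w'` vanishes. Indeed, assuming `β(A) ≠ 0` by symmetry, the vectors
`Z(x) = β(A) x - f_q(x, v) (A, 0) - f_q(x, u) (0, β)` are orthogonal to `u` and `v`, and singular
for `x = u`, `x = v` and for `x` in `V` or in `V*`. Pairing `w'` with `Z(u)` and `Z(v)` gives
`f_q(w', (A, 0)) = f_q(w', (0, β)) = 0`, after which `f_q(w', Z(x)) = β(A) f_q(w', x)`, so `w'`
pairs trivially with `V` and with `V*`. Hence `w = s u + t v`, and `0 = q(w) = s t e`.
-/

namespace HyperbolicLine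

variable {F V : Type*} [Field F] [AddCommGroup V] [Module F V]

local notation "V̄" => V × Module.Dual F V

lemma polarForm_comm (x y : V̄) : polarForm x y = polarForm y x :=
  add_comm _ _

lemma polarForm_self (x : V̄) : polarForm x x = 2 * quadForm x := by
  simp only [polarForm, quadForm]
  ring

lemma quadForm_smul_add_smul (u v : V̄) (s t : F) :
    quadForm (s • u + t • v) = s ^ 2 * quadForm u + s * t * polarForm u v + t ^ 2 * quadForm v := by
  simp only [quadForm, polarForm, Prod.fst_add, Prod.snd_add, Prod.smul_fst, Prod.smul_snd,
    map_add, map_smul, LinearMap.add_apply, LinearMap.smul_apply, smul_eq_mul]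
  ring

lemma polarForm_sub_smul_sub_smul (w u v : V̄) (s t : F) (z : V̄) :
    polarForm (w - s • u - t • v) z = polarForm w z - s * polarForm u z - t * polarForm v z := by
  simp only [polarForm, Prod.fst_sub, Prod.snd_sub, Prod.smul_fst, Prod.smul_snd,
    map_sub, map_smul, LinearMap.sub_apply, LinearMap.smul_apply, smul_eq_mul]
  ring

def perpVec (u v x : V̄) : V̄ :=
  v.2 u.1 • x - polarForm x v • (u.1, 0) - polarForm x u • (0, v.2)

lemma perpVec_perp_left (u v x : V̄) (hu : quadForm u = 0) :
    polarForm (perpVec u v x) u = 0 := by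
  simp only [quadForm] at hu
  simp only [perpVec, polarForm, Prod.fst_sub, Prod.snd_sub, Prod.smul_fst, Prod.smul_snd,
    map_sub, map_smul, LinearMap.sub_apply, LinearMap.smul_apply, smul_eq_mul, map_zero,
    LinearMap.zero_apply, hu]
  ring

lemma perpVec_perp_right (u v x : V̄) (hv : quadForm v = 0) :
    polarForm (perpVec u v x) v = 0 := by
  simp only [quadForm] at hv
  simp only [perpVec, polarForm, Prod.fst_sub, Prod.snd_sub, Prod.smul_fst, Prod.smul_snd,
    map_sub, map_smul, LinearMap.sub_apply, LinearMap.smul_apply, smul_eq_mul, map_zero,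
    LinearMap.zero_apply, hv]
  ring

lemma polarForm_perpVec (u v w x : V̄) :
    polarForm w (perpVec u v x) =
      v.2 u.1 * polarForm w x - polarForm x v * w.2 u.1 - polarForm x u * v.2 w.1 := by
  simp only [perpVec, polarForm, Prod.fst_sub, Prod.snd_sub, Prod.smul_fst, Prod.smul_snd,
    map_sub, map_smul, LinearMap.sub_apply, LinearMap.smul_apply, smul_eq_mul, map_zero,
    LinearMap.zero_apply]
  ring

lemma quadForm_perpVec (u v x : V̄) :
    quadForm (perpVec u v x) =
      v.2 u.1 * (v.2 u.1 * x.2 x.1 - x.2 u.1 * v.2 x.1 + u.2 x.1 * x.2 v.1) := by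
  simp only [perpVec, quadForm, polarForm, Prod.fst_sub, Prod.snd_sub, Prod.smul_fst,
    Prod.smul_snd, map_sub, map_smul, LinearMap.sub_apply, LinearMap.smul_apply, smul_eq_mul,
    map_zero, LinearMap.zero_apply]
  ring

variable {u v w : V × Module.Dual F V}

lemma eq_zero_of_perp_of_ne_zero (hu : quadForm u = 0) (hv : quadForm v = 0)
    (huv : polarForm u v ≠ 0) (hP : v.2 u.1 ≠ 0)
    (hwu : polarForm w u = 0) (hwv : polarForm w v = 0)
    (hperp : ∀ z : V̄, quadForm z = 0 → polarForm z u = 0 → polarForm z v = 0 →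
      polarForm w z = 0) :
    w = 0 := by
  have hZ : ∀ x, quadForm (perpVec u v x) = 0 →
      v.2 u.1 * polarForm w x - polarForm x v * w.2 u.1 - polarForm x u * v.2 w.1 = 0 :=
    fun x hx ↦ polarForm_perpVec u v w x ▸
      hperp _ hx (perpVec_perp_left u v x hu) (perpVec_perp_right u v x hv)
  have hA : w.2 u.1 = 0 := by
    have := hZ u (by simp only [quadForm_perpVec, show u.2 u.1 = 0 from hu]; ring)
    rw [hwu, polarForm_self, hu] at this
    simpa [huv] using this
  have hβ : v.2 w.1 = 0 := by
    have := hZ v (by simp only [quadForm_perpVec, show v.2 v.1 = 0 from hv]; ring)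
    rw [hwv, polarForm_self, hv, polarForm_comm v u] at this
    simpa [huv] using this
  have hfst : ∀ δ : Module.Dual F V, δ w.1 = 0 := fun δ ↦ by
    simpa [hA, hβ, hP, polarForm] using hZ (0, δ) (by simp [quadForm_perpVec])
  have hsnd : ∀ d : V, w.2 d = 0 := fun d ↦ by
    simpa [hA, hβ, hP, polarForm] using hZ (d, 0) (by simp [quadForm_perpVec])
  exact Prod.ext ((Module.forall_dual_apply_eq_zero_iff F _).1 hfst) (LinearMap.ext hsnd)

lemma eq_zero_of_perp (hu : quadForm u = 0) (hv : quadForm v = 0)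
    (huv : polarForm u v ≠ 0) (hwu : polarForm w u = 0) (hwv : polarForm w v = 0)
    (hperp : ∀ z : V̄, quadForm z = 0 → polarForm z u = 0 → polarForm z v = 0 →
      polarForm w z = 0) :
    w = 0 := by
  wlog hP : v.2 u.1 ≠ 0 generalizing u v
  · have hvu : polarForm v u ≠ 0 := polarForm_comm u v ▸ huv
    refine this hv hu hvu hwv hwu (fun z hz hzv hzu ↦ hperp z hz hzu hzv) fun hQ ↦ huv ?_
    simp [polarForm, hQ, not_not.1 hP]
  exact eq_zero_of_perp_of_ne_zero hu hv huv hP hwu hwv hperp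

lemma eq_smul_add_smul_of_perp (hu : quadForm u = 0) (hv : quadForm v = 0)
    (huv : polarForm u v ≠ 0)
    (hperp : ∀ z : V̄, quadForm z = 0 → polarForm z u = 0 → polarForm z v = 0 →
      polarForm w z = 0) :
    w = (polarForm w v / polarForm u v) • u + (polarForm w u / polarForm u v) • v := by
  rw [← sub_eq_zero, ← sub_sub]
  refine eq_zero_of_perp hu hv huv ?_ ?_ fun z hz hzu hzv ↦ ?_
  · rw [polarForm_sub_smul_sub_smul, polarForm_self, hu, polarForm_comm v u,
      div_mul_cancel₀ _ huv]
    ring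
  · rw [polarForm_sub_smul_sub_smul, polarForm_self, hv, div_mul_cancel₀ _ huv]
    ring
  · rw [polarForm_sub_smul_sub_smul, polarForm_comm u z, polarForm_comm v z, hzu, hzv,
      hperp z hz hzu hzv]
    ring

end HyperbolicLine

open HyperbolicLine in
theorem stmt_12_general {F V : Type*} [Field F] [AddCommGroup V] [Module F V]
    (u v : V × Module.Dual F V)
    (hu : quadForm u = 0) (hv : quadForm v = 0)
    (huv : polarForm u v ≠ 0)
    (w : V × Module.Dual F V) (hwq : quadForm w = 0)
    (hperp : ∀ z : V × Module.Dual F V, quadForm z = 0 →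
      polarForm z u = 0 → polarForm z v = 0 → polarForm w z = 0) :
    w ∈ Submodule.span F ({u} : Set (V × Module.Dual F V)) ∨
      w ∈ Submodule.span F ({v} : Set (V × Module.Dual F V)) := by
  set s := polarForm w v / polarForm u v
  set t := polarForm w u / polarForm u v
  have hw : w = s • u + t • v := eq_smul_add_smul_of_perp hu hv huv hperp
  have hst : s * t * polarForm u v = 0 := by
    rw [← hwq, hw, quadForm_smul_add_smul, hu, hv]
    ring
  rcases mul_eq_zero.1 ((mul_eq_zero.1 hst).resolve_right huv) with hs | ht
  · exact Or.inr (Submodule.mem_span_singleton.2 ⟨t, by simp [hw, hs]⟩)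
  · exact Or.inl (Submodule.mem_span_singleton.2 ⟨s, by simp [hw, ht]⟩)

/-- The hyperbolic lines of the quadric `S_q` have size 2: if `[u]` and `[v]` are
opposite points of `S_q` and `[w]` is a point of `S_q` collinear with every point
of `{[u],[v]}^⊥`, then `[w] = [u]` or `[w] = [v]`. -/
theorem stmt_12 {F V : Type*} [Field F] [AddCommGroup V] [Module F V]
    (hV : ¬ Module.Finite F V)
    (u v : V × Module.Dual F V) (hu0 : u ≠ 0) (hv0 : v ≠ 0)
    (hu : quadForm u = 0) (hv : quadForm v = 0)
    (huv : polarForm u v ≠ 0)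
    (w : V × Module.Dual F V) (hw0 : w ≠ 0) (hwq : quadForm w = 0)
    (hperp : ∀ z : V × Module.Dual F V, quadForm z = 0 →
      polarForm z u = 0 → polarForm z v = 0 → polarForm w z = 0) :
    w ∈ Submodule.span F ({u} : Set (V × Module.Dual F V)) ∨
      w ∈ Submodule.span F ({v} : Set (V × Module.Dual F V)) :=
  stmt_12_general u v hu hv huv w hwq hperp
end
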